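/- Let (T,χ,λ) be a normal-form hypertree decomposition of a conjunctive query Q, s a vertex of T, and C ⊆ treecomp(s). Then C is a [χ(s)]-component of Q if and only if C is a [var(λ(s))]-component of Q. -/

import Mathlib

/-- A rooted tree on vertex type `P`, given by a parent function. -/
structure RTree (P : Type) where
  root : P
  parent : P → P
  parent_root : parent root = root
  reaches : ∀ p : P, ∃ n : ℕ, parent^[n] p = root

namespace RTree

variable {P : Type}

/-- `c` is a child of `p` in the rooted tree `T`. -/
def child (T : RTree P) (c p : P) : Prop := c ≠ T.root ∧ T.parent c = p

/-- `p` belongs to the subtree `T_s` rooted at `s`. -/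
def inSubtree (T : RTree P) (s p : P) : Prop := ∃ n : ℕ, T.parent^[n] p = s

/-- The undirected adjacency graph of the rooted tree. -/
def graph (T : RTree P) : SimpleGraph P where
  Adj p q := (p ≠ T.root ∧ T.parent p = q) ∨ (q ≠ T.root ∧ T.parent q = p)
  symm := by
    constructor
    intro p q h
    rcases h with h | h
    · exact Or.inr h
    · exact Or.inl h
  loopless := by
    constructor
    intro p h
    have hh : p ≠ T.root ∧ T.parent p = p := by rcases h with h | h <;> exact h
    obtain ⟨n, hn⟩ := T.reaches p
    have hfix : ∀ m : ℕ, T.parent^[m] p = p := by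
      intro m
      induction m with
      | zero => rfl
      | succ m ih => rw [Function.iterate_succ_apply, hh.2]; exact ih
    exact hh.1 (by rw [← hfix n]; exact hn)

end RTree

/-- A conjunctive query: a set of atoms `A`, each with its set of variables. -/
structure CQ (V A : Type) where
  var : A → Set V

namespace CQ

variable {V A : Type}

/-- The variables of the query. -/
def vars (Q : CQ V A) : Set V := ⋃ a : A, Q.var a

/-- The variables occurring in a set of atoms. -/
def varSet (Q : CQ V A) (S : Set A) : Set V := ⋃ a ∈ S, Q.var a

/-- `x` and `y` are `[S]`-adjacent. -/
def adjOut (Q : CQ V A) (S : Set V) (x y : V) : Prop :=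
  ∃ a : A, x ∈ Q.var a ∧ y ∈ Q.var a ∧ x ∉ S ∧ y ∉ S

/-- `W` is an `[S]`-connected set of variables. -/
def ConnSet (Q : CQ V A) (S W : Set V) : Prop :=
  W ⊆ Q.vars \ S ∧ ∀ x ∈ W, ∀ y ∈ W, Relation.ReflTransGen (Q.adjOut S) x y

/-- `C` is an `[S]`-component: a maximal nonempty `[S]`-connected set. -/
def IsComp (Q : CQ V A) (S C : Set V) : Prop :=
  C.Nonempty ∧ Q.ConnSet S C ∧ ∀ C' : Set V, Q.ConnSet S C' → C ⊆ C' → C' = C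

/-- `Q` is acyclic: it admits a join tree, i.e. a tree on its atoms in which
the occurrences of each variable induce a connected subtree. -/
def acyclic (Q : CQ V A) : Prop :=
  ∃ T : RTree A, ∀ v ∈ Q.vars, (T.graph.induce {a : A | v ∈ Q.var a}).Connected

end CQ

/-- A hypertree decomposition of `Q` on the rooted tree `T`. -/
structure HTD {V A P : Type} (Q : CQ V A) (T : RTree P) where
  χ : P → Set V
  lam : P → Set A
  cover : ∀ a : A, ∃ p : P, Q.var a ⊆ χ p
  conn : ∀ v ∈ Q.vars, (T.graph.induce {p : P | v ∈ χ p}).Connected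
  chiSub : ∀ p : P, χ p ⊆ Q.varSet (lam p)
  special : ∀ p : P, Q.varSet (lam p) ∩ (⋃ q ∈ {q : P | T.inSubtree p q}, χ q) ⊆ χ p

namespace HTD

variable {V A P : Type} {Q : CQ V A} {T : RTree P}

/-- `χ(T_s)`: the union of the `χ` labels over the subtree rooted at `s`. -/
def χSub (D : HTD Q T) (s : P) : Set V := ⋃ q ∈ {q : P | T.inSubtree s q}, D.χ q

/-- The decomposition has width at most `k`. -/
def widthLE (D : HTD Q T) (k : ℕ) : Prop :=
  ∀ p : P, (D.lam p).Finite ∧ (D.lam p).ncard ≤ k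

/-- The decomposition is complete. -/
def complete (D : HTD Q T) : Prop := ∀ a : A, ∃ p : P, Q.var a ⊆ D.χ p ∧ a ∈ D.lam p

/-- `vertices(W, HD)`: the vertices whose `χ` label meets `W`. -/
def verts (D : HTD Q T) (W : Set V) : Set P := {p : P | (D.χ p ∩ W).Nonempty}

/-- Normal form of a hypertree decomposition. -/
def NF (D : HTD Q T) : Prop := ∀ r s : P, T.child s r →
  (∃! C : Set V, Q.IsComp (D.χ r) C ∧ D.χSub s = C ∪ (D.χ s ∩ D.χ r)) ∧
  (∀ C : Set V, Q.IsComp (D.χ r) C → D.χSub s = C ∪ (D.χ s ∩ D.χ r) →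
     (D.χ s ∩ C).Nonempty) ∧
  (Q.varSet (D.lam s) ∩ D.χ r ⊆ D.χ s)

/-- `tc` is the `treecomp` function of a normal-form decomposition. -/
def IsTreeComp (D : HTD Q T) (tc : P → Set V) : Prop :=
  tc T.root = Q.vars ∧ ∀ s : P, s ≠ T.root →
    Q.IsComp (D.χ (T.parent s)) (tc s) ∧
    D.χSub s = tc s ∪ (D.χ s ∩ D.χ (T.parent s))

end HTD

/-- `Q` has hypertree width at most `k`. -/
def CQ.hwLE {V A : Type} (Q : CQ V A) (k : ℕ) : Prop :=
  ∃ (P : Type) (T : RTree P) (D : HTD Q T), D.widthLE k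

/-- The hypertree width of `Q`. -/
noncomputable def CQ.hw {V A : Type} (Q : CQ V A) : ℕ := sInf {k : ℕ | Q.hwLE k}

/-- A query decomposition of `Q` on the rooted tree `T`
(labels may contain both atoms and variables). -/
structure QDec {V A P : Type} (Q : CQ V A) (T : RTree P) where
  la : P → Set A
  lv : P → Set V
  coverA : ∀ a : A, ∃ p : P, a ∈ la p
  connA : ∀ a : A, (T.graph.induce {p : P | a ∈ la p}).Connected
  connV : ∀ v ∈ Q.vars,
    (T.graph.induce {p : P | v ∈ lv p ∨ ∃ a ∈ la p, v ∈ Q.var a}).Connected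

namespace QDec

variable {V A P : Type} {Q : CQ V A} {T : RTree P}

/-- A query decomposition is pure if labels contain atoms only. -/
def pure (D : QDec Q T) : Prop := ∀ p : P, D.lv p = ∅

/-- The query decomposition has width at most `k`. -/
def widthLE (D : QDec Q T) (k : ℕ) : Prop :=
  ∀ p : P, (D.la p).Finite ∧ (D.lv p).Finite ∧ (D.la p).ncard + (D.lv p).ncard ≤ k

end QDec

/-- `Q` has query width at most `k`. -/
def CQ.qwLE {V A : Type} (Q : CQ V A) (k : ℕ) : Prop :=
  ∃ (P : Type) (T : RTree P) (D : QDec Q T), D.widthLE k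

/-- The query width of `Q`. -/
noncomputable def CQ.qw {V A : Type} (Q : CQ V A) : ℕ := sInf {k : ℕ | Q.qwLE k}

/-! The special condition says that, inside `χ(T_s)`, a variable lies in `var(λ(s))` only if
it already lies in `χ(s)`, and the connectedness condition says that a `[χ(s)]`-path starting in
`χ(T_s) \ χ(s)` never leaves `χ(T_s)`: an atom through which it would leave is covered by a vertex
outside `T_s`, and the variable it shares with `χ(T_s)` would then have to occur in `χ(s)`. Within
`χ(T_s)` the separators `χ(s)` and `var(λ(s))` therefore cut out the same components. -/

namespace RTree

variable {P : Type} (T : RTree P)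

theorem eq_of_adj_of_inSubtree {s a b : P} (ha : T.inSubtree s a) (hb : ¬ T.inSubtree s b)
    (hab : T.graph.Adj a b) : a = s := by
  obtain ⟨n, hn⟩ := ha
  rcases hab with ⟨-, hab⟩ | ⟨-, hba⟩
  · cases n with
    | zero => exact hn
    | succ m => exact absurd ⟨m, by rwa [← hab, ← Function.iterate_succ_apply]⟩ hb
  · exact absurd ⟨n + 1, by rwa [Function.iterate_succ_apply, hba]⟩ hb

theorem mem_of_connected_induce {S : Set P} (hS : (T.graph.induce S).Connected) {s p q : P}
    (hp : p ∈ S) (hq : q ∈ S) (hps : T.inSubtree s p) (hqs : ¬ T.inSubtree s q) : s ∈ S := by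
  suffices h : ∀ u v : S, (T.graph.induce S).Walk u v →
      T.inSubtree s u.1 → ¬ T.inSubtree s v.1 → s ∈ S from
    h _ _ (hS.preconnected ⟨p, hp⟩ ⟨q, hq⟩).some hps hqs
  intro u v w hu hv
  induction w with
  | nil => exact absurd hu hv
  | @cons u u' v hadj w ih =>
    by_cases hu' : T.inSubtree s u'.1
    · exact ih hu' hv
    · exact T.eq_of_adj_of_inSubtree hu hu' hadj ▸ u.2

end RTree

namespace CQ

variable {V A : Type} (Q : CQ V A) {S S' U : Set V}

theorem adjOut_anti (h : S ⊆ S') {x y : V} (hxy : Q.adjOut S' x y) : Q.adjOut S x y :=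
  let ⟨a, hx, hy, hxS, hyS⟩ := hxy
  ⟨a, hx, hy, fun h' => hxS (h h'), fun h' => hyS (h h')⟩

theorem ConnSet.anti {W : Set V} (h : S ⊆ S') (hW : Q.ConnSet S' W) : Q.ConnSet S W :=
  ⟨hW.1.trans (Set.sdiff_subset_sdiff_right h), fun x hx y hy =>
    Relation.ReflTransGen.mono (fun _ _ => Q.adjOut_anti h) _ _ (hW.2 x hx y hy)⟩

section Region

variable {Q} (hU : S' ∩ U ⊆ S)
  (hstep : ∀ ⦃x y : V⦄, x ∈ U → x ∉ S → Q.adjOut S x y → y ∈ U)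
include hU hstep

theorem reflTransGen_adjOut_of_region {x y : V} (hx : x ∈ U) (hxS : x ∉ S)
    (hxy : Relation.ReflTransGen (Q.adjOut S) x y) :
    y ∈ U ∧ y ∉ S ∧ Relation.ReflTransGen (Q.adjOut S') x y := by
  induction hxy with
  | refl => exact ⟨hx, hxS, .refl⟩
  | @tail z y _ hzy ih =>
    obtain ⟨hz, hzS, hxz⟩ := ih
    have hy := hstep hz hzS hzy
    obtain ⟨a, hza, hya, -, hyS⟩ := hzy
    exact ⟨hy, hyS, hxz.tail ⟨a, hza, hya, fun h => hzS (hU ⟨h, hz⟩), fun h => hyS (hU ⟨h, hy⟩)⟩⟩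

theorem connSet_iff_of_region (hSS' : S ⊆ S') {W : Set V} (hW : W ⊆ U) :
    Q.ConnSet S W ↔ Q.ConnSet S' W := by
  refine ⟨fun h => ⟨fun x hx => ⟨(h.1 hx).1, fun hS' => (h.1 hx).2 (hU ⟨hS', hW hx⟩)⟩, ?_⟩,
    ConnSet.anti Q hSS'⟩
  exact fun x hx y hy =>
    (reflTransGen_adjOut_of_region hU hstep (hW hx) (h.1 hx).2 (h.2 x hx y hy)).2.2

theorem isComp_iff_of_region (hSS' : S ⊆ S') {C : Set V} (hC : C ⊆ U) :
    Q.IsComp S C ↔ Q.IsComp S' C := by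
  constructor
  · rintro ⟨hne, hconn, hmax⟩
    exact ⟨hne, (connSet_iff_of_region hU hstep hSS' hC).1 hconn,
      fun C' hC' hCC' => hmax C' (hC'.anti Q hSS') hCC'⟩
  · rintro ⟨⟨c, hc⟩, hconn, hmax⟩
    have hcS : c ∉ S := fun h => (hconn.1 hc).2 (hSS' h)
    refine ⟨⟨c, hc⟩, hconn.anti Q hSS', fun C' hC' hCC' => hmax C' ?_ hCC'⟩
    have hC'U : C' ⊆ U := fun x hx =>
      (reflTransGen_adjOut_of_region hU hstep (hC hc) hcS (hC'.2 c (hCC' hc) x hx)).1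
    exact (connSet_iff_of_region hU hstep hSS' hC'U).1 hC'

end Region

end CQ

namespace HTD

variable {V A P : Type} {Q : CQ V A} {T : RTree P} (D : HTD Q T)

theorem mem_χSub_of_adjOut {s : P} {x y : V} (hx : x ∈ D.χSub s) (hxs : x ∉ D.χ s)
    (hxy : Q.adjOut (D.χ s) x y) : y ∈ D.χSub s := by
  obtain ⟨a, hxa, hya, -, -⟩ := hxy
  obtain ⟨p, hp⟩ := D.cover a
  by_cases hps : T.inSubtree s p
  · exact Set.mem_biUnion hps (hp hya)
  · obtain ⟨q, hqs, hxq⟩ := Set.mem_iUnion₂.mp hx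
    exact absurd (T.mem_of_connected_induce (D.conn x (Set.mem_iUnion.mpr ⟨a, hxa⟩))
      hxq (hp hxa) hqs hps) hxs

theorem vars_subset_χSub_root : Q.vars ⊆ D.χSub T.root := by
  intro v hv
  obtain ⟨a, ha⟩ := Set.mem_iUnion.mp hv
  obtain ⟨p, hp⟩ := D.cover a
  exact Set.mem_biUnion (T.reaches p) (hp ha)

theorem IsTreeComp.subset_χSub {D : HTD Q T} {tc : P → Set V} (htc : D.IsTreeComp tc) (s : P) :
    tc s ⊆ D.χSub s := by
  by_cases hs : s = T.root
  · exact hs ▸ htc.1 ▸ D.vars_subset_χSub_root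
  · exact (htc.2 s hs).2 ▸ Set.subset_union_left

end HTD

theorem stmt_11_general {V A P : Type} (Q : CQ V A) (T : RTree P) (D : HTD Q T)
    (tc : P → Set V) (htc : D.IsTreeComp tc) (s : P) (C : Set V)
    (hC : C ⊆ tc s) :
    Q.IsComp (D.χ s) C ↔ Q.IsComp (Q.varSet (D.lam s)) C :=
  CQ.isComp_iff_of_region (D.special s) (fun _ _ => D.mem_χSub_of_adjOut) (D.chiSub s)
    (hC.trans (htc.subset_χSub s))

/-- In a normal-form hypertree decomposition, for a vertex `s` and `C ⊆ treecomp(s)`: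
`C` is a `[χ(s)]`-component of `Q` iff `C` is a `[var(λ(s))]`-component of `Q`. -/
theorem stmt_11 {V A P : Type} (Q : CQ V A) (T : RTree P) (D : HTD Q T)
    (hnf : D.NF) (tc : P → Set V) (htc : D.IsTreeComp tc) (s : P) (C : Set V)
    (hC : C ⊆ tc s) :
    Q.IsComp (D.χ s) C ↔ Q.IsComp (Q.varSet (D.lam s)) C :=
  stmt_11_general Q T D tc htc s C hC
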